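/- arXiv:2510.06821 — 3 statements merged into one kernel-verified Lean document; each statement's English description precedes it below -/
import Mathlib

section
/- For every s > 0, the integral ∫_{ℂ²} |z₂|² ((s⁶/36)|z₂|² - |z₁|²) 1_{|z₁| < (s³/6)|z₂|} (1/π²) e^{-|z₁|²-|z₂|²} dA(z₁) dA(z₂) equals s¹²(54+s⁶) / (18(36+s⁶)²). -/
open MeasureTheory Complex Real Set

lemma radial (f : ℝ → ℝ) :
    ∫ z : ℂ, f ‖z‖ = 2 * Real.pi * ∫ y in Ioi (0:ℝ), y * f y := by
  rw [MeasureTheory.integral_fun_norm_addHaar (volume : Measure ℂ) f]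
  have : ((volume : Measure ℂ) (Metric.ball 0 1)).toReal = Real.pi := by
    simp [Complex.volume_ball]
  simp only [Complex.finrank_real_complex, MeasureTheory.measureReal_def, this, smul_eq_mul, nsmul_eq_mul, show 2 - 1 = 1 from rfl,
    pow_one]
  push_cast; ring

lemma ftc1 (R : ℝ) (hR : 0 ≤ R) :
    ∫ y in (0:ℝ)..R, y * ((R^2 - y^2) * Real.exp (-y^2))
      = (R^2 - 1 + Real.exp (-R^2)) / 2 := by
  have key : ∀ y : ℝ, HasDerivAt (fun y : ℝ => Real.exp (-y^2) * ((1 - R^2)/2 + y^2/2))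
      (y * ((R^2 - y^2) * Real.exp (-y^2))) y := by
    intro y
    have h1 : HasDerivAt (fun y : ℝ => -y^2) (-(2*y)) y := by
      simpa using ((hasDerivAt_pow 2 y).fun_neg)
    have h2 := h1.exp
    have h3 : HasDerivAt (fun y : ℝ => (1 - R^2)/2 + y^2/2) y y := by
      simpa using ((hasDerivAt_pow 2 y).div_const 2).const_add ((1 - R^2)/2)
    have := h2.fun_mul h3
    refine this.congr_deriv ?_
    ring
  rw [intervalIntegral.integral_eq_sub_of_hasDerivAt (fun y _ => key y)
    (by apply Continuous.intervalIntegrable; continuity)]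
  simp [Real.exp_zero]
  ring

lemma inner1 (R : ℝ) (hR : 0 ≤ R) :
    ∫ z : ℂ, (if ‖z‖ < R then (R^2 - ‖z‖^2) * Real.exp (-‖z‖^2) else 0)
      = Real.pi * (R^2 - 1 + Real.exp (-R^2)) := by
  rw [radial (fun r => if r < R then (R^2 - r^2) * Real.exp (-r^2) else 0)]
  have : ∀ y : ℝ, y * (if y < R then (R^2 - y^2) * Real.exp (-y^2) else 0)
      = (Iio R).indicator (fun y => y * ((R^2 - y^2) * Real.exp (-y^2))) y := by
    intro y
    by_cases h : y < R <;> simp [indicator_apply, h, mul_ite]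
  simp_rw [this]
  rw [setIntegral_indicator measurableSet_Iio, Ioi_inter_Iio,
    ← integral_Ioc_eq_integral_Ioo, ← intervalIntegral.integral_of_le hR, ftc1 R hR]
  ring

lemma mom3 (b : ℝ) (hb : 0 < b) :
    ∫ y in Ioi (0:ℝ), y^3 * Real.exp (-b*y^2) = 1/(2*b^2) := by
  have := _root_.integral_rpow_mul_exp_neg_mul_rpow (p := 2) (q := 3) (b := b)
    (by norm_num) (by norm_num) hb
  rw [setIntegral_congr_fun measurableSet_Ioi
    (fun x (hx : x ∈ Ioi (0:ℝ)) => by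
      rw [show ((3:ℝ)) = ((3:ℕ):ℝ) by norm_num, show ((2:ℝ)) = ((2:ℕ):ℝ) by norm_num,
        Real.rpow_natCast, Real.rpow_natCast])] at this
  rw [this, show (-(3+1)/2 : ℝ) = ((-2 : ℤ) : ℝ) by norm_num, Real.rpow_intCast,
    show ((3+1)/2 : ℝ) = ((1:ℕ) + 1 : ℝ) by norm_num, Real.Gamma_nat_eq_factorial]
  simp [zpow_neg]

lemma mom5 : ∫ y in Ioi (0:ℝ), y^5 * Real.exp (-y^2) = 1 := by
  have := _root_.integral_rpow_mul_exp_neg_mul_rpow (p := 2) (q := 5) (b := 1)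
    (by norm_num) (by norm_num) one_pos
  rw [setIntegral_congr_fun measurableSet_Ioi
    (fun x (hx : x ∈ Ioi (0:ℝ)) => by
      rw [show ((5:ℝ)) = ((5:ℕ):ℝ) by norm_num, show ((2:ℝ)) = ((2:ℕ):ℝ) by norm_num,
        Real.rpow_natCast, Real.rpow_natCast])] at this
  simp only [neg_mul, one_mul] at this
  rw [this, show ((5+1)/2 : ℝ) = ((2:ℕ) + 1 : ℝ) by norm_num, Real.Gamma_nat_eq_factorial]
  norm_num

lemma intOn (n : ℕ) (b : ℝ) (hb : 0 < b) :
    IntegrableOn (fun y : ℝ => y^n * Real.exp (-b*y^2)) (Ioi 0) := by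
  refine (integrableOn_rpow_mul_exp_neg_mul_sq hb
    (s := (n:ℝ)) (lt_of_lt_of_le neg_one_lt_zero (Nat.cast_nonneg n))).congr_fun
    (fun x hx => by beta_reduce; rw [Real.rpow_natCast]) measurableSet_Ioi

lemma outer (a : ℝ) (ha : 0 < a) :
    ∫ z : ℂ, ‖z‖^2 * Real.exp (-‖z‖^2) * (a*‖z‖^2 - 1 + Real.exp (-(a*‖z‖^2)))
      = Real.pi * (2*a - 1 + 1/(1+a)^2) := by
  rw [radial (fun y => y^2 * Real.exp (-y^2) * (a*y^2 - 1 + Real.exp (-(a*y^2))))]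
  have hpt : ∀ y : ℝ, y * (y^2 * Real.exp (-y^2) * (a*y^2 - 1 + Real.exp (-(a*y^2))))
      = a * (y^5 * Real.exp (-y^2)) - y^3 * Real.exp (-1*y^2) + y^3 * Real.exp (-(1+a)*y^2) := by
    intro y
    have : Real.exp (-y^2) * Real.exp (-(a*y^2)) = Real.exp (-(1+a)*y^2) := by
      rw [← Real.exp_add]; ring_nf
    rw [← this]; ring
  simp_rw [hpt]
  have h5 : IntegrableOn (fun y : ℝ => y^5 * Real.exp (-y^2)) (Ioi 0) := by
    simpa using intOn 5 1 one_pos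
  have h3 := intOn 3 1 one_pos
  have h3a := intOn 3 (1+a) (by linarith)
  have hsub : IntegrableOn (fun y : ℝ => a * (y^5 * Real.exp (-y^2)) - y^3 * Real.exp (-1*y^2))
      (Ioi 0) := (h5.const_mul a).sub h3
  rw [integral_add hsub h3a, integral_sub (h5.const_mul a) h3,
    MeasureTheory.integral_const_mul, mom5, mom3 1 one_pos, mom3 (1+a) (by linarith)]
  have : (0:ℝ) < (1+a) := by linarith
  field_simp

lemma hnorm2 (z : ℂ) : ‖z‖^2 = z.re^2 + z.im^2 := by
  rw [Complex.sq_norm, Complex.normSq_apply]; ring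

lemma int_pow_gauss (n : ℕ) : Integrable (fun x : ℝ => x^n * Real.exp (-x^2)) := by
  have := integrable_rpow_mul_exp_neg_mul_sq (b := 1) one_pos (s := ((n:ℕ):ℝ))
    (lt_of_lt_of_le neg_one_lt_zero (Nat.cast_nonneg n))
  simpa [Real.rpow_natCast] using this

lemma gauss_c : Integrable (fun z : ℂ => Real.exp (-‖z‖^2)) := by
  have h0 : Integrable (fun x : ℝ => Real.exp (-x^2)) := by
    simpa using int_pow_gauss 0
  have hprod : Integrable (fun p : ℝ × ℝ => Real.exp (-p.1^2) * Real.exp (-p.2^2)) :=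
    h0.mul_prod h0
  rw [← (Complex.volume_preserving_equiv_real_prod).integrable_comp_emb
    (Complex.measurableEquivRealProd.measurableEmbedding)] at hprod
  refine hprod.congr (Filter.Eventually.of_forall fun z => ?_)
  simp only [Function.comp_apply, Complex.measurableEquivRealProd_apply]
  rw [show Real.exp (-‖z‖^2) = Real.exp (-z.re^2) * Real.exp (-z.im^2) from by
    rw [← Real.exp_add, hnorm2]; ring_nf]

lemma gauss4_c : Integrable (fun z : ℂ => ‖z‖^4 * Real.exp (-‖z‖^2)) := by
  have i0 : Integrable (fun x : ℝ => Real.exp (-x^2)) := by simpa using int_pow_gauss 0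
  have i2 := int_pow_gauss 2
  have i4 := int_pow_gauss 4
  have hprod : Integrable (fun p : ℝ × ℝ =>
      (p.1^4 * Real.exp (-p.1^2)) * Real.exp (-p.2^2)
      + 2 * ((p.1^2 * Real.exp (-p.1^2)) * (p.2^2 * Real.exp (-p.2^2)))
      + Real.exp (-p.1^2) * (p.2^4 * Real.exp (-p.2^2))) :=
    ((i4.mul_prod i0).add ((i2.mul_prod i2).const_mul 2)).add (i0.mul_prod i4)
  rw [← (Complex.volume_preserving_equiv_real_prod).integrable_comp_emb
    (Complex.measurableEquivRealProd.measurableEmbedding)] at hprod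
  refine hprod.congr (Filter.Eventually.of_forall fun z => ?_)
  simp only [Function.comp_apply, Complex.measurableEquivRealProd_apply]
  have h4 : ‖z‖^4 = (z.re^2 + z.im^2)^2 := by
    rw [show (4:ℕ) = 2*2 from rfl, pow_mul, hnorm2]
  have he : Real.exp (-‖z‖^2) = Real.exp (-z.re^2) * Real.exp (-z.im^2) := by
    rw [← Real.exp_add, hnorm2]; ring_nf
  rw [h4, he]; ring

/-- For every `s > 0`,
`∫_{ℂ²} |z₂|² ((s⁶/36)|z₂|² - |z₁|²) 1_{|z₁| < (s³/6)|z₂|} (1/π²) e^{-|z₁|²-|z₂|²} dA dA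
  = s¹²(54+s⁶) / (18(36+s⁶)²)`. -/
theorem stmt_6 (s : ℝ) (hs : 0 < s) :
    ∫ p : ℂ × ℂ,
        (if ‖p.1‖ < s ^ 3 / 6 * ‖p.2‖ then
          ‖p.2‖ ^ 2 * (s ^ 6 / 36 * ‖p.2‖ ^ 2 - ‖p.1‖ ^ 2)
            * (1 / Real.pi ^ 2) * Real.exp (-‖p.1‖ ^ 2 - ‖p.2‖ ^ 2)
        else 0)
      = s ^ 12 * (54 + s ^ 6) / (18 * (36 + s ^ 6) ^ 2) := by
  have pi_pos := Real.pi_pos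
  set c : ℝ := s ^ 3 / 6 with hc
  have hc0 : 0 < c := by positivity
  set a : ℝ := c ^ 2 with ha
  have ha0 : 0 < a := by positivity
  have hsc : s ^ 6 / 36 = a := by rw [ha, hc]; ring
  set F : ℂ × ℂ → ℝ := fun p =>
    if ‖p.1‖ < c * ‖p.2‖ then
      ‖p.2‖ ^ 2 * (a * ‖p.2‖ ^ 2 - ‖p.1‖ ^ 2) * (1 / Real.pi ^ 2)
        * Real.exp (-‖p.1‖ ^ 2 - ‖p.2‖ ^ 2)
    else 0 with hF
  have hstmt : ∀ p : ℂ × ℂ,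
      (if ‖p.1‖ < s ^ 3 / 6 * ‖p.2‖ then
          ‖p.2‖ ^ 2 * (s ^ 6 / 36 * ‖p.2‖ ^ 2 - ‖p.1‖ ^ 2)
            * (1 / Real.pi ^ 2) * Real.exp (-‖p.1‖ ^ 2 - ‖p.2‖ ^ 2)
        else 0) = F p := by
    intro p
    simp only [hF, hsc, hc]
  simp_rw [hc, hstmt]
  -- integrability
  have hG : Integrable (fun p : ℂ × ℂ =>
      Real.exp (-‖p.1‖^2) * (a / Real.pi^2 * (‖p.2‖^4 * Real.exp (-‖p.2‖^2))))
      ((volume : Measure ℂ).prod volume) :=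
    gauss_c.mul_prod (gauss4_c.const_mul _)
  rw [← MeasureTheory.Measure.volume_eq_prod ℂ ℂ] at hG
  have hmeas : AEStronglyMeasurable F (volume : Measure (ℂ × ℂ)) := by
    apply Measurable.aestronglyMeasurable
    apply Measurable.ite
    · exact measurableSet_lt measurable_fst.norm (measurable_snd.norm.const_mul c)
    · fun_prop
    · exact measurable_const
  have hFint : Integrable F (volume : Measure (ℂ × ℂ)) := by
    refine hG.mono' hmeas (Filter.Eventually.of_forall fun p => ?_)
    rw [hF]
    by_cases h : ‖p.1‖ < c * ‖p.2‖
    · simp only [h, if_true]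
      have h1 : ‖p.1‖^2 ≤ a * ‖p.2‖^2 := by
        rw [ha]
        calc ‖p.1‖^2 ≤ (c*‖p.2‖)^2 := by
              apply pow_le_pow_left₀ (norm_nonneg _) h.le
          _ = c^2 * ‖p.2‖^2 := by ring
      have hnn : (0:ℝ) ≤ ‖p.2‖ ^ 2 * (a * ‖p.2‖ ^ 2 - ‖p.1‖ ^ 2) * (1 / Real.pi ^ 2)
          * Real.exp (-‖p.1‖ ^ 2 - ‖p.2‖ ^ 2) := by
        have := sub_nonneg.mpr h1
        positivity
      rw [Real.norm_of_nonneg hnn]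
      have he : Real.exp (-‖p.1‖ ^ 2 - ‖p.2‖ ^ 2)
          = Real.exp (-‖p.1‖^2) * Real.exp (-‖p.2‖^2) := by
        rw [← Real.exp_add]; ring_nf
      rw [he]
      have h2 : ‖p.2‖ ^ 2 * (a * ‖p.2‖ ^ 2 - ‖p.1‖ ^ 2) ≤ a * ‖p.2‖^4 := by nlinarith [norm_nonneg p.2, sq_nonneg (‖p.2‖^2)]
      calc ‖p.2‖ ^ 2 * (a * ‖p.2‖ ^ 2 - ‖p.1‖ ^ 2) * (1 / Real.pi ^ 2)
            * (Real.exp (-‖p.1‖^2) * Real.exp (-‖p.2‖^2))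
          ≤ a * ‖p.2‖^4 * (1 / Real.pi ^ 2) * (Real.exp (-‖p.1‖^2) * Real.exp (-‖p.2‖^2)) := by
            apply mul_le_mul_of_nonneg_right (mul_le_mul_of_nonneg_right h2 (by positivity))
              (by positivity)
        _ = Real.exp (-‖p.1‖^2) * (a / Real.pi^2 * (‖p.2‖^4 * Real.exp (-‖p.2‖^2))) := by ring
    · simp only [h, if_false, norm_zero]
      positivity
  -- Fubini
  rw [MeasureTheory.Measure.volume_eq_prod ℂ ℂ] at hFint ⊢
  rw [MeasureTheory.integral_prod_symm F hFint]
  -- inner integral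
  have hinner : ∀ w : ℂ, (∫ z : ℂ, F (z, w))
      = (1/Real.pi) * (‖w‖^2 * Real.exp (-‖w‖^2)
        * (a*‖w‖^2 - 1 + Real.exp (-(a*‖w‖^2)))) := by
    intro w
    have hpt : ∀ z : ℂ, F (z, w) = (‖w‖ ^ 2 * (1 / Real.pi ^ 2) * Real.exp (-‖w‖ ^ 2))
        * (if ‖z‖ < c * ‖w‖ then ((c*‖w‖)^2 - ‖z‖^2) * Real.exp (-‖z‖^2) else 0) := by
      intro z
      rw [hF]
      by_cases h : ‖z‖ < c * ‖w‖
      · simp only [h, if_true]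
        rw [show Real.exp (-‖z‖ ^ 2 - ‖w‖ ^ 2)
            = Real.exp (-‖z‖^2) * Real.exp (-‖w‖^2) from by rw [← Real.exp_add]; ring_nf]
        rw [ha]; ring
      · simp only [if_neg h, mul_zero]
    simp_rw [hpt]
    rw [MeasureTheory.integral_const_mul, inner1 (c*‖w‖) (by positivity)]
    rw [show (c*‖w‖)^2 = a*‖w‖^2 from by rw [ha]; ring]
    field_simp
  simp_rw [hinner]
  rw [MeasureTheory.integral_const_mul, outer a ha0]
  rw [show a = s^6/36 from hsc.symm]
  have h36 : (0:ℝ) < 36 + s^6 := by positivity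
  field_simp
  ring
end

section
/- Let W₁, W₂ be i.i.d. real Gaussian random variables with positive variance. Then there is a constant C > 0 (depending only on the variance) such that for all a, b, c ∈ ℝ and all r > 0, P(|(W₁ - a)(W₂ - b) + c| < r) ≤ C r (1 + |log r|). -/
open MeasureTheory ProbabilityTheory Real

noncomputable def Mv (v : NNReal) : ℝ := (Real.sqrt (2 * Real.pi * v))⁻¹

lemma Mv_nonneg (v : NNReal) : 0 ≤ Mv v := by rw [Mv]; positivity

lemma Mv_pos {v : NNReal} (hv : 0 < v) : 0 < Mv v := by
  have : (0:ℝ) < 2 * Real.pi * v := by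
    have := Real.pi_pos
    have : (0:ℝ) < (v:ℝ) := hv
    positivity
  simp only [Mv]
  positivity

lemma gaussianPDFReal_le (v : NNReal) (m x : ℝ) : gaussianPDFReal m v x ≤ Mv v := by
  rw [gaussianPDFReal, Mv]
  have h1 : Real.exp (-(x - m)^2 / (2 * v)) ≤ 1 := by
    rw [Real.exp_le_one_iff]
    have : (0:ℝ) ≤ (x-m)^2 := sq_nonneg _
    have h2 : (0:ℝ) ≤ 2 * (v:ℝ) := by positivity
    rw [div_nonpos_iff]
    right
    constructor <;> [linarith; exact h2]
  have h0 : (0:ℝ) ≤ (Real.sqrt (2 * Real.pi * v))⁻¹ := by positivity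
  calc (Real.sqrt (2 * Real.pi * ↑v))⁻¹ * Real.exp (-(x - m) ^ 2 / (2 * ↑v))
      ≤ (Real.sqrt (2 * Real.pi * ↑v))⁻¹ * 1 := by gcongr
    _ = _ := mul_one _

lemma gaussianReal_set_le {v : NNReal} (hv : v ≠ 0) (m : ℝ) (s : Set ℝ) :
    gaussianReal m v s ≤ ENNReal.ofReal (Mv v) * volume s := by
  rw [gaussianReal_apply _ hv]
  calc ∫⁻ x in s, gaussianPDF m v x
      ≤ ∫⁻ _ in s, ENNReal.ofReal (Mv v) := by
        refine lintegral_mono fun x => ?_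
        exact ENNReal.ofReal_le_ofReal (gaussianPDFReal_le v m x)
    _ = ENNReal.ofReal (Mv v) * volume s := by
        rw [setLIntegral_const]

lemma gaussianReal_le_smul {v : NNReal} (hv : v ≠ 0) (m : ℝ) :
    gaussianReal m v ≤ (ENNReal.ofReal (Mv v)) • volume := by
  intro s
  simpa using gaussianReal_set_le hv m s

open MeasureTheory ProbabilityTheory Real

-- one-sided log integral
lemma logInt_right {r : ℝ} (hr : 0 < r) (hr1 : r < 1) (a : ℝ) :
    ∫⁻ x in Set.Icc (a + r) (a + 1), ENNReal.ofReal (1 / |x - a|) ∂volume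
      ≤ ENNReal.ofReal |Real.log r| := by
  have hmeas : Measurable (fun x : ℝ => ENNReal.ofReal ((x - a)⁻¹)) := by
    measurability
  have h1 : ∫⁻ x in Set.Icc (a + r) (a + 1), ENNReal.ofReal (1 / |x - a|) ∂volume
      ≤ ∫⁻ x in Set.Icc (a + r) (a + 1), ENNReal.ofReal ((x - a)⁻¹) ∂volume := by
    refine setLIntegral_mono hmeas fun x hx => ?_
    rcases hx with ⟨h1, h2⟩
    have hxa : 0 < x - a := by linarith
    rw [one_div, abs_of_pos hxa]
  refine h1.trans ?_
  have hint : IntegrableOn (fun x : ℝ => (x - a)⁻¹) (Set.Icc (a + r) (a + 1)) volume := by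
    apply ContinuousOn.integrableOn_compact isCompact_Icc
    apply ContinuousOn.inv₀ (by fun_prop)
    intro x hx
    rcases hx with ⟨h1, _⟩
    intro h
    have : 0 < x - a := by linarith
    linarith
  rw [← ofReal_integral_eq_lintegral_ofReal hint ?_]
  · have hle : a + r ≤ a + 1 := by linarith
    rw [MeasureTheory.integral_Icc_eq_integral_Ioc, ← intervalIntegral.integral_of_le hle]
    rw [intervalIntegral.integral_comp_sub_right (fun x => x⁻¹) a]
    have : a + r - a = r := by ring
    rw [this]
    have : a + 1 - a = 1 := by ring
    rw [this]
    rw [integral_inv (by rw [Set.uIcc_of_le (hr1.le)]; exact fun h => absurd h.1 (not_le.mpr hr))]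
    rw [one_div]
    have hlr : Real.log r < 0 := Real.log_neg hr hr1
    rw [Real.log_inv, abs_of_neg hlr]
  · filter_upwards [self_mem_ae_restrict measurableSet_Icc] with x hx
    rcases hx with ⟨h1, _⟩
    have : 0 < x - a := by linarith
    positivity

lemma logInt_left {r : ℝ} (hr : 0 < r) (hr1 : r < 1) (a : ℝ) :
    ∫⁻ x in Set.Icc (a - 1) (a - r), ENNReal.ofReal (1 / |x - a|) ∂volume
      ≤ ENNReal.ofReal |Real.log r| := by
  have hmeas : Measurable (fun x : ℝ => ENNReal.ofReal ((a - x)⁻¹)) :=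
    (((measurable_const.sub measurable_id).inv)).ennreal_ofReal
  have h1 : ∫⁻ x in Set.Icc (a - 1) (a - r), ENNReal.ofReal (1 / |x - a|) ∂volume
      ≤ ∫⁻ x in Set.Icc (a - 1) (a - r), ENNReal.ofReal ((a - x)⁻¹) ∂volume := by
    refine setLIntegral_mono hmeas fun x hx => ?_
    rcases hx with ⟨h1, h2⟩
    have hxa : x - a < 0 := by linarith
    rw [one_div, abs_of_neg hxa, neg_sub]
  refine h1.trans ?_
  have hint : IntegrableOn (fun x : ℝ => (a - x)⁻¹) (Set.Icc (a - 1) (a - r)) volume := by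
    apply ContinuousOn.integrableOn_compact isCompact_Icc
    apply ContinuousOn.inv₀ (by fun_prop)
    intro x hx
    rcases hx with ⟨_, h2⟩
    intro h
    have : 0 < a - x := by linarith
    linarith
  rw [← ofReal_integral_eq_lintegral_ofReal hint ?_]
  · have hle : a - 1 ≤ a - r := by linarith
    rw [MeasureTheory.integral_Icc_eq_integral_Ioc, ← intervalIntegral.integral_of_le hle]
    rw [intervalIntegral.integral_comp_sub_left (fun x => x⁻¹) a]
    have : a - (a - r) = r := by ring
    rw [this]
    have : a - (a - 1) = 1 := by ring
    rw [this]
    rw [integral_inv (by rw [Set.uIcc_of_le (hr1.le)]; exact fun h => absurd h.1 (not_le.mpr hr))]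
    have hlr : Real.log r < 0 := Real.log_neg hr hr1
    rw [one_div, Real.log_inv, abs_of_neg hlr]
  · filter_upwards [self_mem_ae_restrict measurableSet_Icc] with x hx
    rcases hx with ⟨_, h2⟩
    have : 0 < a - x := by linarith
    positivity

lemma inner_bound {v : NNReal} (hv : v ≠ 0) {t : ℝ} (ht : t ≠ 0) (d r : ℝ) (hr : 0 < r) :
    gaussianReal 0 v {y | |y * t + d| < r} ≤ ENNReal.ofReal (Mv v * (2 * r / |t|)) := by
  have htp : 0 < |t| := abs_pos.mpr ht
  have hsub : {y : ℝ | |y * t + d| < r}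
      ⊆ Set.Ioo (-d/t - r/|t|) (-d/t + r/|t|) := by
    intro y hy
    simp only [Set.mem_setOf_eq] at hy
    have heq : y - (-d/t) = (y * t + d) / t := by field_simp; ring
    have habs : |y - (-d/t)| < r / |t| := by
      rw [heq, abs_div]
      gcongr
    rw [abs_sub_lt_iff] at habs
    constructor <;> [linarith [habs.2]; linarith [habs.1]]
  calc gaussianReal 0 v {y | |y * t + d| < r}
      ≤ gaussianReal 0 v (Set.Ioo (-d/t - r/|t|) (-d/t + r/|t|)) := measure_mono hsub
    _ ≤ ENNReal.ofReal (Mv v) * volume (Set.Ioo (-d/t - r/|t|) (-d/t + r/|t|)) :=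
        gaussianReal_set_le hv 0 _
    _ = ENNReal.ofReal (Mv v) * ENNReal.ofReal (2 * r / |t|) := by
        rw [Real.volume_Ioo]
        norm_num
        rw [show r/|t| + r/|t| = 2*r/|t| by ring]
    _ = ENNReal.ofReal (Mv v * (2 * r / |t|)) := by
        rw [← ENNReal.ofReal_mul (Mv_nonneg v)]

lemma outer_bound {v : NNReal} (hv : v ≠ 0) (a : ℝ) {r : ℝ} (hr : 0 < r) (hr1 : r < 1) :
    ∫⁻ x, min 1 (ENNReal.ofReal (2 * Mv v * r / |x - a|)) ∂(gaussianReal 0 v)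
      ≤ ENNReal.ofReal (4 * Mv v * r + 4 * (Mv v)^2 * r * |Real.log r|) := by
  set K := Mv v with hK
  have hK0 : 0 ≤ K := Mv_nonneg v
  set γ := gaussianReal 0 v with hγ
  have habs : Measurable (fun x : ℝ => |x - a|) :=
    (measurable_id.sub measurable_const).abs
  set A : Set ℝ := Set.Ioo (a - r) (a + r) with hA
  set B : Set ℝ := Set.Icc (a - 1) (a - r) ∪ Set.Icc (a + r) (a + 1) with hB
  set Cs : Set ℝ := {x : ℝ | 1 ≤ |x - a|} with hCs
  have hAm : MeasurableSet A := measurableSet_Ioo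
  have hBm : MeasurableSet B := measurableSet_Icc.union measurableSet_Icc
  have hCm : MeasurableSet Cs := measurableSet_le measurable_const habs
  have hfm : Measurable (fun x : ℝ => ENNReal.ofReal (2 * K * r / |x - a|)) :=
    ((measurable_const.div habs)).ennreal_ofReal
  have hpt : ∀ x : ℝ, min 1 (ENNReal.ofReal (2 * K * r / |x - a|))
      ≤ A.indicator (fun _ => 1) x
        + B.indicator (fun x => ENNReal.ofReal (2 * K * r / |x - a|)) x
        + Cs.indicator (fun _ => ENNReal.ofReal (2 * K * r)) x := by
    intro x
    rcases lt_or_ge (|x - a|) r with h1 | h1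
    · have hxA : x ∈ A := by
        rw [abs_sub_lt_iff] at h1
        exact ⟨by linarith [h1.2], by linarith [h1.1]⟩
      calc min 1 (ENNReal.ofReal (2 * K * r / |x - a|)) ≤ 1 := min_le_left _ _
        _ = A.indicator (fun _ => 1) x := by rw [Set.indicator_of_mem hxA]
        _ ≤ _ := le_add_of_le_of_nonneg (le_add_of_le_of_nonneg le_rfl zero_le) zero_le
    · rcases lt_or_ge (|x - a|) 1 with h2 | h2
      · have hxB : x ∈ B := by
          rcases abs_sub_lt_iff.mp h2 with ⟨hb1, hb2⟩
          rcases le_abs'.mp h1 with h3 | h3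
          · left; exact ⟨by linarith, by linarith⟩
          · right; exact ⟨by linarith, by linarith⟩
        calc min 1 (ENNReal.ofReal (2 * K * r / |x - a|))
            ≤ ENNReal.ofReal (2 * K * r / |x - a|) := min_le_right _ _
          _ = B.indicator (fun x => ENNReal.ofReal (2 * K * r / |x - a|)) x := by
              rw [Set.indicator_of_mem hxB]
          _ ≤ _ := by
              refine le_add_of_le_of_nonneg ?_ zero_le
              exact le_add_of_nonneg_of_le zero_le le_rfl
      · have hxC : x ∈ Cs := h2
        calc min 1 (ENNReal.ofReal (2 * K * r / |x - a|))
            ≤ ENNReal.ofReal (2 * K * r / |x - a|) := min_le_right _ _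
          _ ≤ ENNReal.ofReal (2 * K * r) := by
              apply ENNReal.ofReal_le_ofReal
              rw [div_le_iff₀ (by linarith : (0:ℝ) < |x - a|)]
              nlinarith [mul_nonneg (mul_nonneg (by norm_num : (0:ℝ) ≤ 2) hK0) hr.le]
          _ = Cs.indicator (fun _ => ENNReal.ofReal (2 * K * r)) x := by
              rw [Set.indicator_of_mem hxC]
          _ ≤ _ := le_add_of_nonneg_of_le zero_le le_rfl
  have hle : γ ≤ (ENNReal.ofReal K) • (volume : Measure ℝ) := gaussianReal_le_smul hv 0
  calc ∫⁻ x, min 1 (ENNReal.ofReal (2 * K * r / |x - a|)) ∂γ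
      ≤ ∫⁻ x, (A.indicator (fun _ => 1) x
        + B.indicator (fun x => ENNReal.ofReal (2 * K * r / |x - a|)) x
        + Cs.indicator (fun _ => ENNReal.ofReal (2 * K * r)) x) ∂γ := lintegral_mono hpt
    _ = (∫⁻ x, A.indicator (fun _ => 1) x ∂γ)
        + (∫⁻ x, B.indicator (fun x => ENNReal.ofReal (2 * K * r / |x - a|)) x ∂γ)
        + (∫⁻ x, Cs.indicator (fun _ => ENNReal.ofReal (2 * K * r)) x ∂γ) := by
        rw [lintegral_add_right _ (measurable_const.indicator hCm),
          lintegral_add_right _ (hfm.indicator hBm)]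
    _ ≤ ENNReal.ofReal (2 * K * r)
        + ENNReal.ofReal (K * (2 * K * r * (2 * |Real.log r|)))
        + ENNReal.ofReal (2 * K * r) := by
        gcongr
        · -- A term
          rw [lintegral_indicator hAm _, setLIntegral_const, one_mul]
          calc γ A ≤ ENNReal.ofReal K * volume A := gaussianReal_set_le hv 0 _
            _ = ENNReal.ofReal K * ENNReal.ofReal (2 * r) := by
                rw [hA, Real.volume_Ioo, show a + r - (a - r) = 2 * r by ring]
            _ = ENNReal.ofReal (K * (2 * r)) := by rw [← ENNReal.ofReal_mul hK0]
            _ ≤ ENNReal.ofReal (2 * K * r) := by apply ENNReal.ofReal_le_ofReal; nlinarith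
        · -- B term
          rw [lintegral_indicator hBm _]
          have hres : γ.restrict B ≤ ((ENNReal.ofReal K) • (volume : Measure ℝ)).restrict B :=
            Measure.restrict_mono le_rfl hle
          calc ∫⁻ x in B, ENNReal.ofReal (2 * K * r / |x - a|) ∂γ
              ≤ ∫⁻ x in B, ENNReal.ofReal (2 * K * r / |x - a|)
                  ∂((ENNReal.ofReal K) • (volume : Measure ℝ)) := by
                exact lintegral_mono' hres le_rfl
            _ = ENNReal.ofReal K * ∫⁻ x in B, ENNReal.ofReal (2 * K * r / |x - a|) ∂volume := by
                rw [Measure.restrict_smul, lintegral_smul_measure, smul_eq_mul]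
            _ ≤ ENNReal.ofReal K * (ENNReal.ofReal (2 * K * r) * ENNReal.ofReal (2 * |Real.log r|)) := by
                gcongr
                have hsplit : ∫⁻ x in B, ENNReal.ofReal (2 * K * r / |x - a|) ∂volume
                    ≤ (∫⁻ x in Set.Icc (a - 1) (a - r), ENNReal.ofReal (2 * K * r / |x - a|) ∂volume)
                      + ∫⁻ x in Set.Icc (a + r) (a + 1), ENNReal.ofReal (2 * K * r / |x - a|) ∂volume :=
                  lintegral_union_le _ _ _
                refine hsplit.trans ?_
                have hconv : ∀ x : ℝ, ENNReal.ofReal (2 * K * r / |x - a|)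
                    = ENNReal.ofReal (2 * K * r) * ENNReal.ofReal (1 / |x - a|) := by
                  intro x
                  rw [← ENNReal.ofReal_mul (by positivity)]
                  congr 1
                  rw [div_eq_mul_one_div]
                simp_rw [hconv]
                rw [lintegral_const_mul _ (show Measurable (fun x : ℝ => ENNReal.ofReal (1 / |x - a|)) from (measurable_const.div habs).ennreal_ofReal),
                  lintegral_const_mul _ (show Measurable (fun x : ℝ => ENNReal.ofReal (1 / |x - a|)) from (measurable_const.div habs).ennreal_ofReal)]
                rw [← mul_add]
                gcongr
                calc (∫⁻ x in Set.Icc (a - 1) (a - r), ENNReal.ofReal (1 / |x - a|) ∂volume)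
                    + ∫⁻ x in Set.Icc (a + r) (a + 1), ENNReal.ofReal (1 / |x - a|) ∂volume
                    ≤ ENNReal.ofReal |Real.log r| + ENNReal.ofReal |Real.log r| :=
                      add_le_add (logInt_left hr hr1 a) (logInt_right hr hr1 a)
                  _ = ENNReal.ofReal (2 * |Real.log r|) := by
                      rw [← ENNReal.ofReal_add (abs_nonneg _) (abs_nonneg _)]
                      congr 1; ring
            _ = ENNReal.ofReal (K * (2 * K * r * (2 * |Real.log r|))) := by
                rw [← ENNReal.ofReal_mul (by positivity), ← ENNReal.ofReal_mul hK0]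
        · -- C term
          rw [lintegral_indicator hCm _, setLIntegral_const]
          have : γ Cs ≤ 1 := prob_le_one
          calc ENNReal.ofReal (2 * K * r) * γ Cs ≤ ENNReal.ofReal (2 * K * r) * 1 := by gcongr
            _ = _ := mul_one _
    _ ≤ ENNReal.ofReal (4 * K * r + 4 * K^2 * r * |Real.log r|) := by
        rw [← ENNReal.ofReal_add (by positivity) (by positivity),
          ← ENNReal.ofReal_add (by positivity) (by positivity)]
        apply ENNReal.ofReal_le_ofReal
        nlinarith [abs_nonneg (Real.log r), mul_nonneg hK0 hr.le]

/-- Anti-concentration for shifted products of i.i.d. real Gaussians: if `W₁, W₂` are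
i.i.d. real centered Gaussian with variance `v > 0`, there is `C > 0` depending only on
`v` such that for all `a b c : ℝ` and `r > 0`,
`P(|(W₁ - a)(W₂ - b) + c| < r) ≤ C r (1 + |log r|)`. -/
theorem stmt_9 (v : NNReal) (hv : 0 < v) :
    ∃ C : ℝ, 0 < C ∧
      ∀ (Ω : Type) [MeasurableSpace Ω] (μ : Measure Ω), IsProbabilityMeasure μ →
        ∀ (W₁ W₂ : Ω → ℝ),
          Measure.map W₁ μ = gaussianReal 0 v →
          Measure.map W₂ μ = gaussianReal 0 v →
          IndepFun W₁ W₂ μ →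
          ∀ a b c r : ℝ, 0 < r →
            μ {ω | |(W₁ ω - a) * (W₂ ω - b) + c| < r}
              ≤ ENNReal.ofReal (C * r * (1 + |Real.log r|)) := by
  have hv' : v ≠ 0 := hv.ne'
  set K := Mv v with hKdef
  have hK0 : 0 ≤ K := Mv_nonneg v
  refine ⟨4 * K + 4 * K ^ 2 + 1, by positivity, ?_⟩
  intro Ω _ μ hprob W₁ W₂ hW₁ hW₂ hindep a b c r hr
  set C : ℝ := 4 * K + 4 * K ^ 2 + 1 with hCdef
  have hC1 : 1 ≤ C := by nlinarith
  set γ := gaussianReal 0 v with hγdef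
  have hγprob : IsProbabilityMeasure γ := inferInstance
  -- AEMeasurability
  have hW₁m : AEMeasurable W₁ μ := by
    by_contra h
    rw [Measure.map_of_not_aemeasurable h] at hW₁
    exact (IsProbabilityMeasure.ne_zero γ) hW₁.symm
  have hW₂m : AEMeasurable W₂ μ := by
    by_contra h
    rw [Measure.map_of_not_aemeasurable h] at hW₂
    exact (IsProbabilityMeasure.ne_zero γ) hW₂.symm
  -- the event as preimage
  set S : Set (ℝ × ℝ) := {p : ℝ × ℝ | |(p.1 - a) * (p.2 - b) + c| < r} with hSdef
  have hScont : Continuous fun p : ℝ × ℝ => |(p.1 - a) * (p.2 - b) + c| := by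
    fun_prop
  have hSm : MeasurableSet S := measurableSet_lt hScont.measurable measurable_const
  have hmap : μ.map (fun ω => (W₁ ω, W₂ ω)) = γ.prod γ := by
    have h := (indepFun_iff_map_prod_eq_prod_map_map hW₁m hW₂m).mp hindep
    rwa [hW₁, hW₂] at h
  have hev : μ {ω | |(W₁ ω - a) * (W₂ ω - b) + c| < r} = (γ.prod γ) S := by
    rw [← hmap, Measure.map_apply_of_aemeasurable (hW₁m.prodMk hW₂m) hSm]
    rfl
  rw [hev]
  rcases lt_or_ge r 1 with hr1 | hr1
  · -- main case
    have hprod : (γ.prod γ) S = ∫⁻ x, γ (Prod.mk x ⁻¹' S) ∂γ := Measure.prod_apply hSm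
    rw [hprod]
    have hsing : γ {a} = 0 := by
      refine le_antisymm ?_ zero_le
      calc γ {a} ≤ ENNReal.ofReal K * volume {a} := gaussianReal_set_le hv' 0 _
        _ = 0 := by rw [Real.volume_singleton, mul_zero]
    have hae : ∀ᵐ x ∂γ, x ≠ a := by
      rw [ae_iff]
      convert hsing using 2
      ext x
      simp
    have haebound : ∀ᵐ x ∂γ, γ (Prod.mk x ⁻¹' S)
        ≤ min 1 (ENNReal.ofReal (2 * K * r / |x - a|)) := by
      filter_upwards [hae] with x hx
      refine le_min prob_le_one ?_
      have hset : Prod.mk x ⁻¹' S = {y : ℝ | |y * (x - a) + ((x - a) * (-b) + c)| < r} := by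
        ext y
        simp only [hSdef, Set.mem_preimage, Set.mem_setOf_eq]
        rw [show (x - a) * (y - b) + c = y * (x - a) + ((x - a) * (-b) + c) by ring]
      rw [hset]
      have := inner_bound hv' (sub_ne_zero.mpr hx) ((x - a) * (-b) + c) r hr
      refine this.trans (le_of_eq ?_)
      congr 1
      rw [hKdef]
      ring
    calc ∫⁻ x, γ (Prod.mk x ⁻¹' S) ∂γ
        ≤ ∫⁻ x, min 1 (ENNReal.ofReal (2 * K * r / |x - a|)) ∂γ := lintegral_mono_ae haebound
      _ ≤ ENNReal.ofReal (4 * K * r + 4 * K ^ 2 * r * |Real.log r|) := outer_bound hv' a hr hr1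
      _ ≤ ENNReal.ofReal (C * r * (1 + |Real.log r|)) := by
          apply ENNReal.ofReal_le_ofReal
          have hl0 : 0 ≤ |Real.log r| := abs_nonneg _
          nlinarith [mul_nonneg hK0 hr.le, mul_nonneg (mul_nonneg hK0 hK0) hr.le,
            mul_nonneg hr.le hl0]
  · -- trivial case r ≥ 1
    have h1 : (γ.prod γ) S ≤ 1 := prob_le_one
    refine h1.trans ?_
    rw [show (1 : ENNReal) = ENNReal.ofReal 1 by simp]
    apply ENNReal.ofReal_le_ofReal
    have hl0 : 0 ≤ |Real.log r| := abs_nonneg _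
    have h2 : (1:ℝ) ≤ r * (1 + |Real.log r|) := by nlinarith
    calc (1:ℝ) = 1 * 1 := by ring
      _ ≤ C * (r * (1 + |Real.log r|)) := mul_le_mul hC1 h2 zero_le_one (by linarith)
      _ = C * r * (1 + |Real.log r|) := by ring
end

section
/- Let Z₁, Z₂ be independent centered complex Gaussian random variables with common variance σ > 0. Then there exists C > 0 depending only on σ such that for all r > 0, P(|Im(Z₂ conj(Z₁))| < r) ≤ C r (1 + |log r|). -/
open MeasureTheory ProbabilityTheory Complex ComplexConjugate
open scoped NNReal ENNReal

section auxiliary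
open Real Set

noncomputable def Mconst (v : ℝ≥0) : ℝ := (Real.sqrt (2 * Real.pi * (v:ℝ)))⁻¹

lemma Mconst_pos {v : ℝ≥0} (hv : v ≠ 0) : 0 < Mconst v := by
  have : (0:ℝ) < (v:ℝ) := by positivity
  rw [Mconst]
  positivity

lemma gaussianPDF_le {v : ℝ≥0} (x : ℝ) :
    gaussianPDF 0 v x ≤ ENNReal.ofReal (Mconst v) := by
  refine ENNReal.ofReal_le_ofReal ?_
  rw [gaussianPDFReal, Mconst]
  have h1 : rexp (-(x - 0)^2 / (2*(v:ℝ))) ≤ 1 := by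
    rw [Real.exp_le_one_iff]
    have h2 : (0:ℝ) ≤ (x-0)^2 := sq_nonneg _
    have h3 : (0:ℝ) ≤ 2*(v:ℝ) := by positivity
    exact div_nonpos_of_nonpos_of_nonneg (by linarith) h3
  nlinarith [Real.sqrt_nonneg (2 * Real.pi * (v:ℝ)), inv_nonneg.2 (Real.sqrt_nonneg (2 * Real.pi * (v:ℝ)))]

lemma gauss_setLIntegral_le {v : ℝ≥0} (hv : v ≠ 0) {h : ℝ → ℝ≥0∞} (hm : Measurable h)
    {s : Set ℝ} (hs : MeasurableSet s) :
    ∫⁻ x in s, h x ∂(gaussianReal 0 v) ≤ ENNReal.ofReal (Mconst v) * ∫⁻ x in s, h x := by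
  rw [gaussianReal_of_var_ne_zero _ hv, restrict_withDensity hs,
    lintegral_withDensity_eq_lintegral_mul _ (measurable_gaussianPDF _ _) hm]
  calc ∫⁻ x in s, (gaussianPDF 0 v * h) x ≤ ∫⁻ x in s, ENNReal.ofReal (Mconst v) * h x :=
        lintegral_mono fun x => mul_le_mul_left (gaussianPDF_le x) _
    _ = ENNReal.ofReal (Mconst v) * ∫⁻ x in s, h x := lintegral_const_mul _ hm

lemma gauss_set_le {v : ℝ≥0} (hv : v ≠ 0) (s : Set ℝ) :
    gaussianReal 0 v s ≤ ENNReal.ofReal (Mconst v) * volume s := by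
  rw [gaussianReal_of_var_ne_zero _ hv, withDensity_apply' _ s]
  calc ∫⁻ x in s, gaussianPDF 0 v x ≤ ∫⁻ _ in s, ENNReal.ofReal (Mconst v) :=
        lintegral_mono fun x => gaussianPDF_le x
    _ = ENNReal.ofReal (Mconst v) * volume s := setLIntegral_const _ _

lemma gauss_strip {v : ℝ≥0} (hv : v ≠ 0) {a b r : ℝ} (ha : a ≠ 0) (hr : 0 < r) :
    gaussianReal 0 v {y | |a * y - b| < r}
      ≤ ENNReal.ofReal (min 1 (2 * Mconst v * r / |a|)) := by
  have hM := Mconst_pos hv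
  have habs : 0 < |a| := abs_pos.2 ha
  rcases le_total 1 (2 * Mconst v * r / |a|) with h1 | h1
  · rw [min_eq_left h1, ENNReal.ofReal_one]
    exact prob_le_one
  · rw [min_eq_right h1]
    have hsub : {y : ℝ | |a * y - b| < r} ⊆ Set.Ioo (b/a - r/|a|) (b/a + r/|a|) := by
      intro y hy
      simp only [Set.mem_setOf_eq] at hy
      have key : |y - b/a| < r / |a| := by
        have : |y - b/a| = |a * y - b| / |a| := by
          rw [eq_div_iff habs.ne', ← abs_mul]
          congr 1
          field_simp
        rw [this]
        exact (div_lt_div_iff_of_pos_right habs).mpr hy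
      rw [abs_lt] at key
      constructor <;> [linarith [key.1]; linarith [key.2]]
    calc gaussianReal 0 v {y | |a * y - b| < r}
        ≤ gaussianReal 0 v (Set.Ioo (b/a - r/|a|) (b/a + r/|a|)) := measure_mono hsub
      _ ≤ ENNReal.ofReal (Mconst v) * volume (Set.Ioo (b/a - r/|a|) (b/a + r/|a|)) :=
          gauss_set_le hv _
      _ ≤ ENNReal.ofReal (2 * Mconst v * r / |a|) := by
          rw [Real.volume_Ioo, ← ENNReal.ofReal_mul hM.le]
          refine ENNReal.ofReal_le_ofReal (le_of_eq ?_)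
          field_simp
          ring

noncomputable def Cconst (v : ℝ≥0) : ℝ :=
  2 * Mconst v * (2 * Mconst v) * (1 + |Real.log (2 * Mconst v)|)
    + 2 * Mconst v * (2 * Mconst v) + 2 * Mconst v + 1

lemma Cconst_pos {v : ℝ≥0} (hv : v ≠ 0) : 0 < Cconst v := by
  have hM := Mconst_pos hv
  have h1 : (0:ℝ) ≤ |Real.log (2 * Mconst v)| := abs_nonneg _
  rw [Cconst]; nlinarith

lemma gauss_min_lintegral {v : ℝ≥0} (hv : v ≠ 0) {r : ℝ} (hr : 0 < r) :
    ∫⁻ x, ENNReal.ofReal (min 1 (2 * Mconst v * r / |x|)) ∂(gaussianReal 0 v)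
      ≤ ENNReal.ofReal (Cconst v * r * (1 + |Real.log r|)) := by
  have hM := Mconst_pos hv
  set M := Mconst v with hMdef
  set c : ℝ := 2 * M with hcdef
  have hc0 : 0 < c := by positivity
  have hCc : Cconst v = c * c * (1 + |Real.log c|) + c * c + c + 1 := by
    rw [Cconst, ← hMdef, ← hcdef]
  have hK : (0:ℝ) ≤ |Real.log r| := abs_nonneg _
  have hC0 : 0 < Cconst v := Cconst_pos hv
  have hle1 : ∫⁻ x, ENNReal.ofReal (min 1 (c * r / |x|)) ∂(gaussianReal 0 v) ≤ 1 := by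
    calc ∫⁻ x, ENNReal.ofReal (min 1 (c * r / |x|)) ∂(gaussianReal 0 v)
        ≤ ∫⁻ _, 1 ∂(gaussianReal 0 v) :=
          lintegral_mono fun x => by
            simpa using ENNReal.ofReal_le_one.2 (min_le_left _ _)
      _ = 1 := by simp
  by_cases htriv : 1 ≤ Cconst v * r
  · refine hle1.trans ?_
    rw [show (1:ℝ≥0∞) = ENNReal.ofReal 1 by simp]
    refine ENNReal.ofReal_le_ofReal ?_
    nlinarith
  push_neg at htriv
  have hcC : c ≤ Cconst v := by nlinarith [abs_nonneg (Real.log c), sq_nonneg c]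
  have hcr1 : c * r < 1 := by nlinarith [mul_le_mul_of_nonneg_right hcC hr.le]
  have hcr0 : 0 < c * r := by positivity
  -- the four bounding functions
  set f₁ : ℝ → ℝ≥0∞ := (Icc (-(c*r)) (c*r)).indicator (fun _ => 1) with hf₁
  set f₂ : ℝ → ℝ≥0∞ := (Ioc (c*r) 1).indicator (fun x => ENNReal.ofReal (c*r/x)) with hf₂
  set f₃ : ℝ → ℝ≥0∞ := (Ico (-1 : ℝ) (-(c*r))).indicator
      (fun x => ENNReal.ofReal (c*r/(-x))) with hf₃
  have hpt : ∀ x : ℝ, ENNReal.ofReal (min 1 (c * r / |x|))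
      ≤ f₁ x + f₂ x + f₃ x + ENNReal.ofReal (c*r) := by
    intro x
    rcases le_or_gt |x| (c*r) with h | h
    · have hx : x ∈ Icc (-(c*r)) (c*r) := by
        rcases abs_le.1 h with ⟨h1, h2⟩; exact ⟨h1, h2⟩
      have : ENNReal.ofReal (min 1 (c * r / |x|)) ≤ f₁ x := by
        rw [hf₁, indicator_of_mem hx]
        simpa using ENNReal.ofReal_le_one.2 (min_le_left _ _)
      exact le_add_right (le_add_right (le_add_right this))
    · have hx0 : 0 < |x| := lt_trans hcr0 h
      have hmin : ENNReal.ofReal (min 1 (c * r / |x|)) ≤ ENNReal.ofReal (c*r/|x|) :=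
        ENNReal.ofReal_le_ofReal (min_le_right _ _)
      rcases le_or_gt |x| 1 with h2 | h2
      · rcases le_or_gt 0 x with hx | hx
        · have hxm : x ∈ Ioc (c*r) 1 := by
            rw [_root_.abs_of_nonneg hx] at h h2; exact ⟨h, h2⟩
          have : ENNReal.ofReal (min 1 (c * r / |x|)) ≤ f₂ x := by
            rw [hf₂, indicator_of_mem hxm, _root_.abs_of_nonneg hx] at *
            exact hmin
          exact le_add_right (le_add_right (this.trans le_add_self))
        · have hxm : x ∈ Ico (-1 : ℝ) (-(c*r)) := by
            rw [_root_.abs_of_neg hx] at h h2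
            constructor <;> linarith
          have : ENNReal.ofReal (min 1 (c * r / |x|)) ≤ f₃ x := by
            rw [hf₃, indicator_of_mem hxm, _root_.abs_of_neg hx] at *
            exact hmin
          exact le_add_right (this.trans le_add_self)
      · have : c * r / |x| ≤ c * r := div_le_self hcr0.le h2.le
        exact (hmin.trans (ENNReal.ofReal_le_ofReal this)).trans le_add_self
  have hm2 : Measurable fun x : ℝ => ENNReal.ofReal (c*r/x) :=
    (measurable_const.div measurable_id).ennreal_ofReal
  have hm3 : Measurable fun x : ℝ => ENNReal.ofReal (c*r/(-x)) :=
    (measurable_const.div measurable_id.neg).ennreal_ofReal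
  have hmf1 : Measurable f₁ := measurable_const.indicator measurableSet_Icc
  have hmf2 : Measurable f₂ := hm2.indicator measurableSet_Ioc
  have hmf3 : Measurable f₃ := hm3.indicator measurableSet_Ico
  have hlog : Real.log (c*r) ≤ 0 := Real.log_nonpos hcr0.le hcr1.le
  have hT1 : ∫⁻ x, f₁ x ∂(gaussianReal 0 v) ≤ ENNReal.ofReal (M * (2*(c*r))) := by
    rw [hf₁, lintegral_indicator measurableSet_Icc]
    calc ∫⁻ _ in Icc (-(c*r)) (c*r), (1:ℝ≥0∞) ∂(gaussianReal 0 v)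
        = gaussianReal 0 v (Icc (-(c*r)) (c*r)) := setLIntegral_one _
      _ ≤ ENNReal.ofReal M * volume (Icc (-(c*r)) (c*r)) := gauss_set_le hv _
      _ ≤ ENNReal.ofReal (M * (2*(c*r))) := by
          rw [Real.volume_Icc, ← ENNReal.ofReal_mul hM.le]
          exact ENNReal.ofReal_le_ofReal (le_of_eq (by ring))
  have hJ : ∫⁻ x in Ioc (c*r) 1, ENNReal.ofReal (c*r/x)
      = ENNReal.ofReal (c*r * (-Real.log (c*r))) := by
    have hint : IntegrableOn (fun x => c*r/x) (Ioc (c*r) 1) volume := by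
      apply (ContinuousOn.integrableOn_Icc ?_).mono_set Ioc_subset_Icc_self
      exact continuousOn_const.div continuousOn_id
        (fun x hx => ne_of_gt (lt_of_lt_of_le hcr0 hx.1))
    have hnn : 0 ≤ᵐ[volume.restrict (Ioc (c*r) 1)] fun x => c*r/x := by
      filter_upwards [ae_restrict_mem measurableSet_Ioc] with x hx
      exact div_nonneg hcr0.le (le_of_lt (lt_trans hcr0 hx.1))
    rw [← ofReal_integral_eq_lintegral_ofReal hint hnn]
    congr 1
    rw [← intervalIntegral.integral_of_le hcr1.le]
    simp_rw [div_eq_mul_inv]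
    rw [intervalIntegral.integral_const_mul, integral_inv_of_pos hcr0 one_pos,
      one_div, Real.log_inv]
  have hJ3 : ∫⁻ x in Ico (-1 : ℝ) (-(c*r)), ENNReal.ofReal (c*r/(-x))
      = ENNReal.ofReal (c*r * (-Real.log (c*r))) := by
    have hint : IntegrableOn (fun x => c*r/(-x)) (Ico (-1 : ℝ) (-(c*r))) volume := by
      apply (ContinuousOn.integrableOn_Icc ?_).mono_set Ico_subset_Icc_self
      exact continuousOn_const.div continuousOn_id.neg
        (fun x hx => ne_of_gt (lt_of_lt_of_le hcr0 (by linarith [hx.2])))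
    have hnn : 0 ≤ᵐ[volume.restrict (Ico (-1 : ℝ) (-(c*r)))] fun x => c*r/(-x) := by
      filter_upwards [ae_restrict_mem measurableSet_Ico] with x hx
      exact div_nonneg hcr0.le (le_of_lt (lt_trans hcr0 (by linarith [hx.2])))
    rw [← ofReal_integral_eq_lintegral_ofReal hint hnn]
    congr 1
    rw [integral_Ico_eq_integral_Ioo, ← integral_Ioc_eq_integral_Ioo,
      ← intervalIntegral.integral_of_le (by linarith : (-1:ℝ) ≤ -(c*r))]
    have h0 : (0:ℝ) ∉ Set.uIcc (-1 : ℝ) (-(c*r)) := by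
      rw [Set.uIcc_of_le (by linarith : (-1:ℝ) ≤ -(c*r))]
      intro h0
      rcases h0 with ⟨_, h2⟩
      linarith
    simp_rw [show ∀ x:ℝ, c*r/(-x) = -(c*r) * x⁻¹ from fun x => by
      rw [div_neg, div_eq_mul_inv, ← neg_mul]]
    rw [intervalIntegral.integral_const_mul, integral_inv h0]
    rw [show (-(c*r))/(-1:ℝ) = c*r by ring]
    ring
  have hT2 : ∫⁻ x, f₂ x ∂(gaussianReal 0 v)
      ≤ ENNReal.ofReal (M * (c*r * (-Real.log (c*r)))) := by
    rw [hf₂, lintegral_indicator measurableSet_Ioc]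
    calc ∫⁻ x in Ioc (c*r) 1, ENNReal.ofReal (c*r/x) ∂(gaussianReal 0 v)
        ≤ ENNReal.ofReal M * ∫⁻ x in Ioc (c*r) 1, ENNReal.ofReal (c*r/x) :=
          gauss_setLIntegral_le hv hm2 measurableSet_Ioc
      _ = ENNReal.ofReal (M * (c*r * (-Real.log (c*r)))) := by
          rw [hJ, ← ENNReal.ofReal_mul hM.le]
  have hT3 : ∫⁻ x, f₃ x ∂(gaussianReal 0 v)
      ≤ ENNReal.ofReal (M * (c*r * (-Real.log (c*r)))) := by
    rw [hf₃, lintegral_indicator measurableSet_Ico]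
    calc ∫⁻ x in Ico (-1 : ℝ) (-(c*r)), ENNReal.ofReal (c*r/(-x)) ∂(gaussianReal 0 v)
        ≤ ENNReal.ofReal M * ∫⁻ x in Ico (-1 : ℝ) (-(c*r)), ENNReal.ofReal (c*r/(-x)) :=
          gauss_setLIntegral_le hv hm3 measurableSet_Ico
      _ = ENNReal.ofReal (M * (c*r * (-Real.log (c*r)))) := by
          rw [hJ3, ← ENNReal.ofReal_mul hM.le]
  have hT4 : ∫⁻ _, ENNReal.ofReal (c*r) ∂(gaussianReal 0 v) = ENNReal.ofReal (c*r) := by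
    rw [lintegral_const, measure_univ, mul_one]
  have hsplit : ∫⁻ x, (f₁ x + f₂ x + f₃ x + ENNReal.ofReal (c*r)) ∂(gaussianReal 0 v)
      = (∫⁻ x, f₁ x ∂(gaussianReal 0 v)) + (∫⁻ x, f₂ x ∂(gaussianReal 0 v))
        + (∫⁻ x, f₃ x ∂(gaussianReal 0 v)) + ∫⁻ _, ENNReal.ofReal (c*r) ∂(gaussianReal 0 v) := by
    rw [lintegral_add_right _ measurable_const, lintegral_add_right _ hmf3,
      lintegral_add_right _ hmf2]
  have hlogle : -Real.log (c*r) ≤ |Real.log c| + |Real.log r| := by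
    rw [Real.log_mul hc0.ne' hr.ne']
    calc -(Real.log c + Real.log r) = -Real.log c + -Real.log r := by ring
      _ ≤ |Real.log c| + |Real.log r| := add_le_add (neg_le_abs _) (neg_le_abs _)
  calc ∫⁻ x, ENNReal.ofReal (min 1 (c * r / |x|)) ∂(gaussianReal 0 v)
      ≤ ∫⁻ x, (f₁ x + f₂ x + f₃ x + ENNReal.ofReal (c*r)) ∂(gaussianReal 0 v) :=
        lintegral_mono hpt
    _ = _ := hsplit
    _ ≤ ENNReal.ofReal (M * (2*(c*r))) + ENNReal.ofReal (M * (c*r * (-Real.log (c*r))))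
        + ENNReal.ofReal (M * (c*r * (-Real.log (c*r)))) + ENNReal.ofReal (c*r) :=
        add_le_add (add_le_add (add_le_add hT1 hT2) hT3) hT4.le
    _ ≤ ENNReal.ofReal (M * (2*(c*r)) + M * (c*r * (-Real.log (c*r)))
        + M * (c*r * (-Real.log (c*r))) + c*r) := by
        have hnl : (0:ℝ) ≤ M * (c*r * (-Real.log (c*r))) :=
          mul_nonneg hM.le (mul_nonneg hcr0.le (neg_nonneg.2 hlog))
        rw [ENNReal.ofReal_add, ENNReal.ofReal_add, ENNReal.ofReal_add]
        all_goals nlinarith [hnl, hM.le, hcr0.le, mul_pos hM (mul_pos hc0 hr)]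
    _ ≤ ENNReal.ofReal (Cconst v * r * (1 + |Real.log r|)) := by
        refine ENNReal.ofReal_le_ofReal ?_
        have key := mul_le_mul_of_nonneg_left hlogle (by positivity : (0:ℝ) ≤ M * (c*r))
        rw [hCc]
        rw [hcdef] at key ⊢
        nlinarith [key, hr.le, hK, abs_nonneg (Real.log (2*M)),
          mul_nonneg hr.le hK,
          mul_nonneg hM.le hr.le,
          mul_nonneg (mul_nonneg hM.le hr.le) hK,
          mul_nonneg (mul_nonneg hM.le hM.le) hr.le,
          mul_nonneg (mul_nonneg (mul_nonneg hM.le hM.le) hr.le) hK,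
          mul_nonneg (mul_nonneg (mul_nonneg (mul_nonneg hM.le hM.le)
            (abs_nonneg (Real.log (2*M)))) hr.le) hK]

end auxiliary

lemma iIndepFun_ae_congr {Ω : Type} [MeasurableSpace Ω] {μ : Measure Ω}
    {f g : Fin 4 → Ω → ℝ} (h : ∀ i, f i =ᵐ[μ] g i)
    (hf : iIndepFun f μ) :
    iIndepFun g μ := by
  rw [iIndepFun_iff_measure_inter_preimage_eq_mul] at hf ⊢
  intro S sets hsets
  have hae : ∀ᵐ ω ∂μ, ∀ i, f i ω = g i ω := ae_all_iff.2 h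
  have h1 : μ (⋂ i ∈ S, g i ⁻¹' sets i) = μ (⋂ i ∈ S, f i ⁻¹' sets i) := by
    apply measure_congr
    filter_upwards [hae] with ω hω
    show (ω ∈ ⋂ i ∈ S, g i ⁻¹' sets i) = (ω ∈ ⋂ i ∈ S, f i ⁻¹' sets i)
    simp only [Set.mem_iInter, Set.mem_preimage, hω]
  rw [h1, hf S hsets]
  exact Finset.prod_congr rfl fun i _ =>
    measure_congr (by
      filter_upwards [h i] with ω hω
      show (ω ∈ f i ⁻¹' sets i) = (ω ∈ g i ⁻¹' sets i)
      simp only [Set.mem_preimage, hω])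

/-- If `Z₁ = X₁ + iY₁` and `Z₂ = X₂ + iY₂` are independent centered complex Gaussians
with common variance `σ > 0` (real and imaginary parts independent real Gaussians of
variance `σ/2`), then there is `C > 0` depending only on `σ` such that for all `r > 0`,
`P(|Im (Z₂ conj Z₁)| < r) ≤ C r (1 + |log r|)`. -/
theorem stmt_10 (σ : NNReal) (hσ : 0 < σ) :
    ∃ C : ℝ, 0 < C ∧
      ∀ (Ω : Type) [MeasurableSpace Ω] (μ : Measure Ω), IsProbabilityMeasure μ →
        ∀ (X₁ Y₁ X₂ Y₂ : Ω → ℝ),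
          iIndepFun ![X₁, Y₁, X₂, Y₂] μ →
          Measure.map X₁ μ = gaussianReal 0 (σ / 2) →
          Measure.map Y₁ μ = gaussianReal 0 (σ / 2) →
          Measure.map X₂ μ = gaussianReal 0 (σ / 2) →
          Measure.map Y₂ μ = gaussianReal 0 (σ / 2) →
          ∀ r : ℝ, 0 < r →
            μ {ω | |(((X₂ ω : ℂ) + (Y₂ ω : ℂ) * Complex.I)
                * conj ((X₁ ω : ℂ) + (Y₁ ω : ℂ) * Complex.I)).im| < r}
              ≤ ENNReal.ofReal (C * r * (1 + |Real.log r|)) := by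
  have hv : (σ/2 : ℝ≥0) ≠ 0 := by
    simp only [ne_eq, div_eq_zero_iff]
    push_neg
    exact ⟨hσ.ne', by norm_num⟩
  refine ⟨Cconst (σ/2), Cconst_pos hv, ?_⟩
  intro Ω mΩ μ hprob X₁ Y₁ X₂ Y₂ hind hX₁ hY₁ hX₂ hY₂ r hr
  have ham : ∀ (f : Ω → ℝ), μ.map f = gaussianReal 0 (σ/2) → AEMeasurable f μ := by
    intro f hf
    by_contra h
    rw [Measure.map_of_not_aemeasurable h] at hf
    exact (IsProbabilityMeasure.ne_zero (gaussianReal 0 (σ/2))) hf.symm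
  have hm1 := ham X₁ hX₁
  have hm2 := ham Y₁ hY₁
  have hm3 := ham X₂ hX₂
  have hm4 := ham Y₂ hY₂
  set A : Ω → ℝ := hm1.mk X₁ with hA
  set B : Ω → ℝ := hm2.mk Y₁ with hB
  set D : Ω → ℝ := hm3.mk X₂ with hD
  set E : Ω → ℝ := hm4.mk Y₂ with hE
  set f' : Fin 4 → Ω → ℝ := ![A, B, D, E] with hf'
  have he0 : f' 0 = A := rfl
  have he1 : f' 1 = B := rfl
  have he2 : f' 2 = D := rfl
  have he3 : f' 3 = E := rfl
  have hfm : ∀ i, Measurable (f' i) := by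
    intro i
    fin_cases i
    exacts [hm1.measurable_mk, hm2.measurable_mk, hm3.measurable_mk, hm4.measurable_mk]
  have haeq : ∀ i, (![X₁, Y₁, X₂, Y₂] : Fin 4 → Ω → ℝ) i =ᵐ[μ] f' i := by
    intro i
    fin_cases i
    exacts [hm1.ae_eq_mk, hm2.ae_eq_mk, hm3.ae_eq_mk, hm4.ae_eq_mk]
  have hind' : iIndepFun f' μ := iIndepFun_ae_congr haeq hind
  have hAlaw : μ.map A = gaussianReal 0 (σ/2) :=
    (Measure.map_congr hm1.ae_eq_mk).symm.trans hX₁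
  have hElaw : μ.map E = gaussianReal 0 (σ/2) :=
    (Measure.map_congr hm4.ae_eq_mk).symm.trans hY₂
  set U : Ω → ℝ × ℝ := fun ω => (A ω, D ω * B ω) with hU
  have hUm : Measurable U := (hfm 0).prodMk ((hfm 2).mul (hfm 1))
  have hVm : Measurable E := hfm 3
  have hUV : IndepFun U E μ := by
    have h01 := hind'.indepFun_finset {0,1,2} {3} (by decide) hfm
    let φ : (∀ _ : ({0,1,2} : Finset (Fin 4)), ℝ) → ℝ × ℝ :=
      fun g => (g ⟨0, by decide⟩, g ⟨2, by decide⟩ * g ⟨1, by decide⟩)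
    let ψ : (∀ _ : ({3} : Finset (Fin 4)), ℝ) → ℝ := fun g => g ⟨3, by decide⟩
    have hφ : Measurable φ :=
      (measurable_pi_apply _).prodMk ((measurable_pi_apply _).mul (measurable_pi_apply _))
    have hψ : Measurable ψ := measurable_pi_apply _
    exact h01.comp hφ hψ
  set S : Set ((ℝ × ℝ) × ℝ) := {p | |p.1.1 * p.2 - p.1.2| < r} with hS
  have hSm : MeasurableSet S := by
    have hc : Continuous fun p : (ℝ × ℝ) × ℝ => |p.1.1 * p.2 - p.1.2| := by fun_prop
    exact measurableSet_lt hc.measurable measurable_const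
  haveI := hprob
  have hpair : μ.map (fun ω => (U ω, E ω)) = (μ.map U).prod (gaussianReal 0 (σ/2)) := by
    rw [← hElaw]
    exact (indepFun_iff_map_prod_eq_prod_map_map hUm.aemeasurable hVm.aemeasurable).mp hUV
  have him : ∀ ω, (((X₂ ω : ℂ) + (Y₂ ω : ℂ) * Complex.I)
      * conj ((X₁ ω : ℂ) + (Y₁ ω : ℂ) * Complex.I)).im
      = X₁ ω * Y₂ ω - X₂ ω * Y₁ ω := by
    intro ω
    simp [Complex.mul_im]
    ring
  have hev : μ {ω | |(((X₂ ω : ℂ) + (Y₂ ω : ℂ) * Complex.I)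
      * conj ((X₁ ω : ℂ) + (Y₁ ω : ℂ) * Complex.I)).im| < r}
      = μ {ω | |A ω * E ω - D ω * B ω| < r} := by
    have h1 : {ω | |(((X₂ ω : ℂ) + (Y₂ ω : ℂ) * Complex.I)
        * conj ((X₁ ω : ℂ) + (Y₁ ω : ℂ) * Complex.I)).im| < r}
        = {ω | |X₁ ω * Y₂ ω - X₂ ω * Y₁ ω| < r} := by
      ext ω
      simp only [Set.mem_setOf_eq, him ω]
    rw [h1]
    apply measure_congr
    filter_upwards [hm1.ae_eq_mk, hm2.ae_eq_mk, hm3.ae_eq_mk, hm4.ae_eq_mk]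
      with ω e1 e2 e3 e4
    show (|X₁ ω * Y₂ ω - X₂ ω * Y₁ ω| < r) = (|A ω * E ω - D ω * B ω| < r)
    rw [e1, e2, e3, e4]
  have hμE : μ {ω | |A ω * E ω - D ω * B ω| < r}
      = ((μ.map U).prod (gaussianReal 0 (σ/2))) S := by
    rw [← hpair, Measure.map_apply (hUm.prodMk hVm) hSm]
    rfl
  rw [hev, hμE, Measure.prod_apply hSm]
  have h0' : ∀ᵐ u ∂(μ.map U), u.1 ≠ 0 := by
    rw [ae_iff]
    have hset : {u : ℝ × ℝ | ¬ u.1 ≠ 0} = Prod.fst ⁻¹' {0} := by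
      ext u; simp
    rw [hset, Measure.map_apply hUm ((measurableSet_singleton (0:ℝ)).preimage measurable_fst)]
    have : U ⁻¹' (Prod.fst ⁻¹' {0}) = A ⁻¹' {0} := rfl
    rw [this, ← Measure.map_apply hm1.measurable_mk (measurableSet_singleton 0), hAlaw]
    exact (gaussianReal_absolutelyContinuous 0 hv) (by simp)
  have hinner : ∀ᵐ u ∂(μ.map U), gaussianReal 0 (σ/2) (Prod.mk u ⁻¹' S)
      ≤ ENNReal.ofReal (min 1 (2 * Mconst (σ/2) * r / |u.1|)) := by
    filter_upwards [h0'] with u hu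
    have : Prod.mk u ⁻¹' S = {y | |u.1 * y - u.2| < r} := rfl
    rw [this]
    exact gauss_strip hv hu hr
  have hgm : Measurable fun x : ℝ => ENNReal.ofReal (min 1 (2 * Mconst (σ/2) * r / |x|)) :=
    (measurable_const.min (measurable_const.div measurable_id.abs)).ennreal_ofReal
  calc ∫⁻ u, gaussianReal 0 (σ/2) (Prod.mk u ⁻¹' S) ∂(μ.map U)
      ≤ ∫⁻ u, ENNReal.ofReal (min 1 (2 * Mconst (σ/2) * r / |u.1|)) ∂(μ.map U) :=
        lintegral_mono_ae hinner
    _ = ∫⁻ x, ENNReal.ofReal (min 1 (2 * Mconst (σ/2) * r / |x|))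
          ∂((μ.map U).map Prod.fst) := (lintegral_map hgm measurable_fst).symm
    _ = ∫⁻ x, ENNReal.ofReal (min 1 (2 * Mconst (σ/2) * r / |x|))
          ∂(gaussianReal 0 (σ/2)) := by
        rw [Measure.map_map measurable_fst hUm]
        have : (Prod.fst ∘ U) = A := rfl
        rw [this, hAlaw]
    _ ≤ ENNReal.ofReal (Cconst (σ/2) * r * (1 + |Real.log r|)) := gauss_min_lintegral hv hr
end
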